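/- Suppose U₀₁ ∈ B(H₁,K₀) and U₁₀ ∈ B(H₀,K₁) are invertible operators satisfying U₀₁*∘U₀₁ = (1 + X*∘X)⁻¹ and U₁₀*∘U₁₀ = (1 + X∘X*)⁻¹, that T̃₁ = U₁₀T₀U₁₀⁻¹ and T̃₀ = (U₀₁*)⁻¹T₁U₀₁*, and that T̃₀∘(Y − U₀₁∘X*∘U₁₀⁻¹) = (Y − U₀₁∘X*∘U₁₀⁻¹)∘T̃₁. Then the block operator U := [[U₀₁∘X*, U₀₁],[U₁₀, −U₁₀∘X]] : H₀⊕H₁ → K₀⊕K₁ is unitary and satisfies UT = T̃U; in particular T and T̃ are unitarily equivalent. -/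

import Mathlib

/-!
Write `U = diag(U₀₁, U₁₀) ∘ [[X*, 1], [1, -X]]`. With `P = U₀₁*U₀₁ = (1 + X*X)⁻¹` and
`Q = U₁₀*U₁₀ = (1 + XX*)⁻¹`, the push-through identity `QX = XP` (and `PX* = X*Q`) kills the
off-diagonal blocks of `U*U` and turns its diagonal blocks into `(1 + XX*)Q` and `(1 + X*X)P`.
The blocks of `UU*` are `U₀₁(1 + X*X)U₀₁*` and `U₁₀(1 + XX*)U₁₀*`, which are `1` because
`U₀₁(1 + X*X) = (U₀₁*)⁻¹`. For `UT = T̃U`, the hypothesis on `Y` says that `Y` and `U₀₁X*U₁₀⁻¹`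
have the same commutator with `(T̃₀, T̃₁)`, which computes the corner `YT̃₁ - T̃₀Y` of `T̃`.
-/

open ContinuousLinearMap

noncomputable def blockOp {H₀ H₁ K₀ K₁ : Type*}
    [NormedAddCommGroup H₀] [InnerProductSpace ℂ H₀]
    [NormedAddCommGroup H₁] [InnerProductSpace ℂ H₁]
    [NormedAddCommGroup K₀] [InnerProductSpace ℂ K₀]
    [NormedAddCommGroup K₁] [InnerProductSpace ℂ K₁]
    (A : H₀ →L[ℂ] K₀) (B : H₁ →L[ℂ] K₀) (C : H₀ →L[ℂ] K₁) (D : H₁ →L[ℂ] K₁) :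
    WithLp 2 (H₀ × H₁) →L[ℂ] WithLp 2 (K₀ × K₁) :=
  (((WithLp.prodContinuousLinearEquiv 2 ℂ K₀ K₁).symm : (K₀ × K₁) →L[ℂ] WithLp 2 (K₀ × K₁)) ∘L
    ((A.coprod B).prod (C.coprod D))) ∘L
    ((WithLp.prodContinuousLinearEquiv 2 ℂ H₀ H₁ : WithLp 2 (H₀ × H₁) →L[ℂ] (H₀ × H₁)))

namespace ContinuousLinearMap

theorem comp_eq_comp_of_one_add_comp {R E F : Type*} [Ring R] [TopologicalSpace E]
    [AddCommGroup E] [IsTopologicalAddGroup E] [Module R E] [TopologicalSpace F] [AddCommGroup F]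
    [IsTopologicalAddGroup F] [Module R F] {A : E →L[R] F} {B : F →L[R] E} {P : E →L[R] E}
    {Q : F →L[R] F} (hP : (1 + B ∘L A) ∘L P = 1) (hQ : Q ∘L (1 + A ∘L B) = 1) :
    Q ∘L A = A ∘L P := by
  have hA : A ∘L (1 + B ∘L A) = (1 + A ∘L B) ∘L A := by
    simp only [comp_add, add_comp, one_def, comp_id, id_comp, comp_assoc]
  calc Q ∘L A = Q ∘L A ∘L ((1 + B ∘L A) ∘L P) := by rw [hP, one_def, comp_id]
    _ = (Q ∘L (1 + A ∘L B)) ∘L A ∘L P := by rw [← comp_assoc A, hA]; simp only [comp_assoc]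
    _ = A ∘L P := by rw [hQ, one_def, id_comp]

variable {𝕜 E F : Type*} [RCLike 𝕜]
  [NormedAddCommGroup E] [InnerProductSpace 𝕜 E] [CompleteSpace E]
  [NormedAddCommGroup F] [InnerProductSpace 𝕜 F] [CompleteSpace F]

theorem comp_eq_adjoint_of_adjoint_comp_self_comp_eq_one {A : E →L[𝕜] F} {V : F →L[𝕜] E}
    (hAV : A ∘L V = 1) {M : E →L[𝕜] E} (h : (adjoint A ∘L A) ∘L M = 1) :
    A ∘L M = adjoint V := by
  have hVA : adjoint V ∘L adjoint A = 1 := by rw [← adjoint_comp, hAV, one_def, adjoint_id]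
  calc A ∘L M = (adjoint V ∘L adjoint A) ∘L A ∘L M := by rw [hVA, one_def, id_comp]
    _ = adjoint V ∘L ((adjoint A ∘L A) ∘L M) := by simp only [comp_assoc]
    _ = adjoint V := by rw [h, one_def, comp_id]

theorem comp_comp_adjoint_eq_one_of_adjoint_comp_self_comp_eq_one {A : E →L[𝕜] F}
    {V : F →L[𝕜] E} (hAV : A ∘L V = 1) {M : E →L[𝕜] E} (h : (adjoint A ∘L A) ∘L M = 1) :
    A ∘L M ∘L adjoint A = 1 := by
  rw [← comp_assoc, comp_eq_adjoint_of_adjoint_comp_self_comp_eq_one hAV h, ← adjoint_comp, hAV,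
    one_def, adjoint_id]

end ContinuousLinearMap

section BlockOp

variable {H₀ H₁ K₀ K₁ L₀ L₁ : Type*}
  [NormedAddCommGroup H₀] [InnerProductSpace ℂ H₀] [NormedAddCommGroup H₁] [InnerProductSpace ℂ H₁]
  [NormedAddCommGroup K₀] [InnerProductSpace ℂ K₀] [NormedAddCommGroup K₁] [InnerProductSpace ℂ K₁]
  [NormedAddCommGroup L₀] [InnerProductSpace ℂ L₀] [NormedAddCommGroup L₁] [InnerProductSpace ℂ L₁]

@[simp]
theorem blockOp_apply_fst (A : H₀ →L[ℂ] K₀) (B : H₁ →L[ℂ] K₀) (C : H₀ →L[ℂ] K₁)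
    (D : H₁ →L[ℂ] K₁) (x : WithLp 2 (H₀ × H₁)) : (blockOp A B C D x).fst = A x.fst + B x.snd :=
  rfl

@[simp]
theorem blockOp_apply_snd (A : H₀ →L[ℂ] K₀) (B : H₁ →L[ℂ] K₀) (C : H₀ →L[ℂ] K₁)
    (D : H₁ →L[ℂ] K₁) (x : WithLp 2 (H₀ × H₁)) : (blockOp A B C D x).snd = C x.fst + D x.snd :=
  rfl

theorem withLp_prod_ext {F G : WithLp 2 (H₀ × H₁) →L[ℂ] WithLp 2 (K₀ × K₁)}
    (h₀ : ∀ x, (F x).fst = (G x).fst) (h₁ : ∀ x, (F x).snd = (G x).snd) : F = G :=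
  ext fun x ↦ WithLp.ofLp_injective 2 (Prod.ext (h₀ x) (h₁ x))

theorem blockOp_one_zero_zero_one : blockOp (1 : H₀ →L[ℂ] H₀) 0 0 (1 : H₁ →L[ℂ] H₁) = .id ℂ _ :=
  withLp_prod_ext (fun _ ↦ by simp) (fun _ ↦ by simp)

theorem blockOp_comp_blockOp (A : K₀ →L[ℂ] L₀) (B : K₁ →L[ℂ] L₀) (C : K₀ →L[ℂ] L₁)
    (D : K₁ →L[ℂ] L₁) (A' : H₀ →L[ℂ] K₀) (B' : H₁ →L[ℂ] K₀) (C' : H₀ →L[ℂ] K₁)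
    (D' : H₁ →L[ℂ] K₁) :
    blockOp A B C D ∘L blockOp A' B' C' D' =
      blockOp (A ∘L A' + B ∘L C') (A ∘L B' + B ∘L D') (C ∘L A' + D ∘L C') (C ∘L B' + D ∘L D') :=
  withLp_prod_ext (fun _ ↦ by simp; abel) (fun _ ↦ by simp; abel)

theorem adjoint_blockOp [CompleteSpace H₀] [CompleteSpace H₁] [CompleteSpace K₀]
    [CompleteSpace K₁] (A : H₀ →L[ℂ] K₀) (B : H₁ →L[ℂ] K₀) (C : H₀ →L[ℂ] K₁)
    (D : H₁ →L[ℂ] K₁) :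
    adjoint (blockOp A B C D) = blockOp (adjoint A) (adjoint C) (adjoint B) (adjoint D) := by
  refine ((eq_adjoint_iff _ _).2 fun x y ↦ ?_).symm
  simp only [WithLp.prod_inner_apply, WithLp.ofLp_fst, WithLp.ofLp_snd, blockOp_apply_fst,
    blockOp_apply_snd, inner_add_left, inner_add_right, adjoint_inner_left]
  ring

end BlockOp

section UnitaryEquivalence

variable {H₀ H₁ K₀ K₁ : Type*}
  [NormedAddCommGroup H₀] [InnerProductSpace ℂ H₀] [CompleteSpace H₀]
  [NormedAddCommGroup H₁] [InnerProductSpace ℂ H₁] [CompleteSpace H₁]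
  [NormedAddCommGroup K₀] [InnerProductSpace ℂ K₀] [CompleteSpace K₀]
  [NormedAddCommGroup K₁] [InnerProductSpace ℂ K₁]
  {X : H₁ →L[ℂ] H₀} {U₀₁ : H₁ →L[ℂ] K₀} {U₁₀ : H₀ →L[ℂ] K₁}

noncomputable def blockUnitary (X : H₁ →L[ℂ] H₀) (U₀₁ : H₁ →L[ℂ] K₀) (U₁₀ : H₀ →L[ℂ] K₁) :
    WithLp 2 (H₀ × H₁) →L[ℂ] WithLp 2 (K₀ × K₁) :=
  blockOp (U₀₁ ∘L adjoint X) U₀₁ U₁₀ (-(U₁₀ ∘L X))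

theorem adjoint_blockUnitary_comp_self [CompleteSpace K₁]
    (hP : (adjoint U₀₁ ∘L U₀₁) ∘L (1 + adjoint X ∘L X) = 1)
    (hP' : (1 + adjoint X ∘L X) ∘L (adjoint U₀₁ ∘L U₀₁) = 1)
    (hQ : (adjoint U₁₀ ∘L U₁₀) ∘L (1 + X ∘L adjoint X) = 1)
    (hQ' : (1 + X ∘L adjoint X) ∘L (adjoint U₁₀ ∘L U₁₀) = 1) :
    adjoint (blockUnitary X U₀₁ U₁₀) ∘L blockUnitary X U₀₁ U₁₀ = .id ℂ _ := by
  have hQX := comp_eq_comp_of_one_add_comp hP' hQ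
  have hPX := comp_eq_comp_of_one_add_comp hQ' hP
  simp only [comp_assoc] at hQX hPX
  simp only [one_def, add_comp, id_comp, comp_assoc] at hP' hQ'
  rw [blockUnitary, adjoint_blockOp, blockOp_comp_blockOp, ← blockOp_one_zero_zero_one]
  simp only [adjoint_comp, adjoint_adjoint, map_neg, neg_comp, comp_neg, comp_assoc, hQX, hPX,
    neg_neg, add_neg_cancel]
  rw [add_comm, hQ', hP']
  rfl

theorem blockUnitary_comp_adjoint_self [CompleteSpace K₁] {V₀₁ : K₀ →L[ℂ] H₁}
    {V₁₀ : K₁ →L[ℂ] H₀}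
    (hUV₀₁ : U₀₁ ∘L V₀₁ = 1) (hUV₁₀ : U₁₀ ∘L V₁₀ = 1)
    (hP : (adjoint U₀₁ ∘L U₀₁) ∘L (1 + adjoint X ∘L X) = 1)
    (hQ : (adjoint U₁₀ ∘L U₁₀) ∘L (1 + X ∘L adjoint X) = 1) :
    blockUnitary X U₀₁ U₁₀ ∘L adjoint (blockUnitary X U₀₁ U₁₀) = .id ℂ _ := by
  have h₀ := comp_comp_adjoint_eq_one_of_adjoint_comp_self_comp_eq_one hUV₀₁ hP
  have h₁ := comp_comp_adjoint_eq_one_of_adjoint_comp_self_comp_eq_one hUV₁₀ hQ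
  simp only [one_def, comp_add, add_comp, id_comp, comp_assoc] at h₀ h₁
  rw [blockUnitary, adjoint_blockOp, blockOp_comp_blockOp, ← blockOp_one_zero_zero_one]
  simp only [adjoint_comp, adjoint_adjoint, map_neg, neg_comp, comp_neg, comp_assoc, neg_neg,
    add_neg_cancel]
  rw [add_comm, h₀, h₁]
  rfl

theorem blockUnitary_comp_blockOp {T₀ : H₀ →L[ℂ] H₀} {T₁ : H₁ →L[ℂ] H₁} {T' : K₀ →L[ℂ] K₀}
    {T'' : K₁ →L[ℂ] K₁} {Y : K₁ →L[ℂ] K₀} {V₀₁ : K₀ →L[ℂ] H₁} {V₁₀ : K₁ →L[ℂ] H₀}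
    (hUV₀₁ : U₀₁ ∘L V₀₁ = 1) (hVU₁₀ : V₁₀ ∘L U₁₀ = 1)
    (hP : (adjoint U₀₁ ∘L U₀₁) ∘L (1 + adjoint X ∘L X) = 1)
    (hT'' : T'' = U₁₀ ∘L T₀ ∘L V₁₀) (hT' : T' = adjoint V₀₁ ∘L T₁ ∘L adjoint U₀₁)
    (hY : T' ∘L (Y - U₀₁ ∘L adjoint X ∘L V₁₀) = (Y - U₀₁ ∘L adjoint X ∘L V₁₀) ∘L T'') :
    blockUnitary X U₀₁ U₁₀ ∘L blockOp T₀ (X ∘L T₁ - T₀ ∘L X) 0 T₁ =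
      blockOp T' (Y ∘L T'' - T' ∘L Y) 0 T'' ∘L blockUnitary X U₀₁ U₁₀ := by
  have hTU : T'' ∘L U₁₀ = U₁₀ ∘L T₀ := by
    rw [hT'', comp_assoc, comp_assoc, hVU₁₀, one_def, comp_id]
  have hTUG : T' ∘L U₀₁ ∘L (1 + adjoint X ∘L X) = U₀₁ ∘L (1 + adjoint X ∘L X) ∘L T₁ := by
    calc T' ∘L U₀₁ ∘L (1 + adjoint X ∘L X)
        = adjoint V₀₁ ∘L T₁ ∘L ((adjoint U₀₁ ∘L U₀₁) ∘L (1 + adjoint X ∘L X)) := by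
          rw [hT']; simp only [comp_assoc]
      _ = U₀₁ ∘L (1 + adjoint X ∘L X) ∘L T₁ := by
          rw [← comp_assoc U₀₁, comp_eq_adjoint_of_adjoint_comp_self_comp_eq_one hUV₀₁ hP, hP,
            one_def, comp_id]
  have hYU : (Y ∘L T'' - T' ∘L Y) ∘L U₁₀ = U₀₁ ∘L adjoint X ∘L T₀ - T' ∘L U₀₁ ∘L adjoint X := by
    have hY' : Y ∘L T'' - T' ∘L Y =
        U₀₁ ∘L adjoint X ∘L V₁₀ ∘L T'' - T' ∘L U₀₁ ∘L adjoint X ∘L V₁₀ := by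
      simp only [comp_sub, sub_comp, comp_assoc] at hY ⊢
      linear_combination (norm := abel) -hY
    rw [hY', sub_comp]
    simp only [comp_assoc]
    rw [hTU, ← comp_assoc V₁₀, hVU₁₀, one_def, id_comp, comp_id]
  rw [blockUnitary, blockOp_comp_blockOp, blockOp_comp_blockOp, comp_neg, ← comp_assoc _ U₁₀,
    hYU]
  simp only [one_def, comp_add, add_comp, comp_sub, sub_comp, comp_neg, neg_comp, comp_zero,
    zero_comp, add_zero, zero_add, id_comp, comp_id, comp_assoc] at hTUG ⊢
  congr 1
  · abel
  · linear_combination (norm := abel) -hTUG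
  · exact hTU.symm
  · rw [← comp_assoc T'' U₁₀, hTU, comp_assoc]
    abel

end UnitaryEquivalence

/-- sufficiency: if `U₀₁, U₁₀` are invertible with `U₀₁*U₀₁ = (1+X*X)⁻¹`,
`U₁₀*U₁₀ = (1+XX*)⁻¹`, `T̃₁ = U₁₀T₀U₁₀⁻¹`, `T̃₀ = (U₀₁*)⁻¹T₁U₀₁*` and
`T̃₀(Y - U₀₁X*U₁₀⁻¹) = (Y - U₀₁X*U₁₀⁻¹)T̃₁`, then
`U = [[U₀₁X*, U₀₁],[U₁₀, -U₁₀X]]` is unitary and `UT = T̃U`. -/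
theorem stmt3 {H₀ H₁ K₀ K₁ : Type*}
    [NormedAddCommGroup H₀] [InnerProductSpace ℂ H₀] [CompleteSpace H₀]
    [NormedAddCommGroup H₁] [InnerProductSpace ℂ H₁] [CompleteSpace H₁]
    [NormedAddCommGroup K₀] [InnerProductSpace ℂ K₀] [CompleteSpace K₀]
    [NormedAddCommGroup K₁] [InnerProductSpace ℂ K₁] [CompleteSpace K₁]
    (T₀ : H₀ →L[ℂ] H₀) (T₁ : H₁ →L[ℂ] H₁) (X : H₁ →L[ℂ] H₀)
    (T' : K₀ →L[ℂ] K₀) (T'' : K₁ →L[ℂ] K₁) (Y : K₁ →L[ℂ] K₀)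
    (U₀₁ : H₁ →L[ℂ] K₀) (U₁₀ : H₀ →L[ℂ] K₁)
    (V₀₁ : K₀ →L[ℂ] H₁) (V₁₀ : K₁ →L[ℂ] H₀)
    (hV₀₁ : U₀₁ ∘L V₀₁ = 1 ∧ V₀₁ ∘L U₀₁ = 1)
    (hV₁₀ : U₁₀ ∘L V₁₀ = 1 ∧ V₁₀ ∘L U₁₀ = 1)
    (h01 : (adjoint U₀₁ ∘L U₀₁) ∘L (1 + adjoint X ∘L X) = 1 ∧
           (1 + adjoint X ∘L X) ∘L (adjoint U₀₁ ∘L U₀₁) = 1)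
    (h10 : (adjoint U₁₀ ∘L U₁₀) ∘L (1 + X ∘L adjoint X) = 1 ∧
           (1 + X ∘L adjoint X) ∘L (adjoint U₁₀ ∘L U₁₀) = 1)
    (hT'' : T'' = U₁₀ ∘L T₀ ∘L V₁₀)
    (hT' : T' = adjoint V₀₁ ∘L T₁ ∘L adjoint U₀₁)
    (hY : T' ∘L (Y - U₀₁ ∘L adjoint X ∘L V₁₀) = (Y - U₀₁ ∘L adjoint X ∘L V₁₀) ∘L T'')
    (U : WithLp 2 (H₀ × H₁) →L[ℂ] WithLp 2 (K₀ × K₁))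
    (hU : U = blockOp (U₀₁ ∘L adjoint X) U₀₁ U₁₀ (-(U₁₀ ∘L X))) :
    adjoint U ∘L U = ContinuousLinearMap.id ℂ _ ∧
    U ∘L adjoint U = ContinuousLinearMap.id ℂ _ ∧
    U ∘L blockOp T₀ (X ∘L T₁ - T₀ ∘L X) 0 T₁
      = blockOp T' (Y ∘L T'' - T' ∘L Y) 0 T'' ∘L U := by
  subst hU
  exact ⟨adjoint_blockUnitary_comp_self h01.1 h01.2 h10.1 h10.2,
    blockUnitary_comp_adjoint_self hV₀₁.1 hV₁₀.1 h01.1 h10.1,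
    blockUnitary_comp_blockOp hV₀₁.1 hV₁₀.2 h01.1 hT'' hT' hY⟩
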